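/- Let (A, d) be an m-PD-CDGA over a field k. Then the linear involution A^1 → A^1, a ↦ -a, restricts to a bijection of R^i_s(A) onto R^{m-i}_s(A) for all 0 ≤ i ≤ m and all s ≥ 0; that is, for a ∈ MC(A), dim_k H^i(A, δ_a) ≥ s if and only if dim_k H^{m-i}(A, δ_{-a}) ≥ s. -/

import Mathlib

open scoped TensorProduct DirectSum

/-- A commutative differential graded algebra (CDGA) over a field `k`:
an ℕ-graded, associative, unital, graded-commutative `k`-algebra together with a
degree `+1` differential satisfying `d ∘ d = 0` and the graded Leibniz rule. -/
structure CDGA (k : Type) [Field k] : Type 1 where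
  carrier : Type
  [ringCarrier : Ring carrier]
  [algebraCarrier : Algebra k carrier]
  grading : ℕ → Submodule k carrier
  [gradedAlgebra : GradedAlgebra grading]
  gcomm : ∀ ⦃i j : ℕ⦄ ⦃u v : carrier⦄, u ∈ grading i → v ∈ grading j →
    u * v = ((-1 : k) ^ (i * j)) • (v * u)
  d : carrier →ₗ[k] carrier
  d_mem : ∀ ⦃i : ℕ⦄ ⦃u : carrier⦄, u ∈ grading i → d u ∈ grading (i + 1)
  d_sq : ∀ u : carrier, d (d u) = 0
  leibniz : ∀ ⦃i j : ℕ⦄ ⦃u v : carrier⦄, u ∈ grading i → v ∈ grading j →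
    d (u * v) = d u * v + ((-1 : k) ^ i) • (u * d v)

attribute [instance] CDGA.ringCarrier CDGA.algebraCarrier CDGA.gradedAlgebra

namespace CDGA

variable {k : Type} [Field k]

/-- A CDGA is of finite type if each graded piece is finite-dimensional. -/
def FiniteType (A : CDGA k) : Prop := ∀ i : ℕ, FiniteDimensional k (A.grading i)

/-- A CDGA is connected if its degree-0 part is the span of the unit. -/
def Connected (A : CDGA k) : Prop :=
  ∀ u ∈ A.grading 0, ∃ c : k, u = algebraMap k A.carrier c

/-- The Maurer–Cartan condition: `a·a + d a = 0` for `a ∈ A¹`. -/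
def IsMC (A : CDGA k) (a : A.grading 1) : Prop :=
  (a : A.carrier) * (a : A.carrier) + A.d (a : A.carrier) = 0

/-- The differential `δ_a(u) = a·u + d u` of the Aomoto complex, in degree `q`. -/
noncomputable def delta (A : CDGA k) (a : A.grading 1) (q : ℕ) :
    A.grading q →ₗ[k] A.grading (q + 1) where
  toFun u := ⟨(a : A.carrier) * (u : A.carrier) + A.d (u : A.carrier), by
    have h1 : (a : A.carrier) * (u : A.carrier) ∈ A.grading (1 + q) :=
      SetLike.mul_mem_graded a.2 u.2
    rw [add_comm] at h1
    exact Submodule.add_mem _ h1 (A.d_mem u.2)⟩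
  map_add' u v := by
    ext
    simp only [Submodule.coe_add, mul_add, map_add]
    abel
  map_smul' c u := by
    ext
    simp only [SetLike.val_smul, RingHom.id_apply, Submodule.coe_smul, map_smul,
      mul_smul_comm, smul_add]

/-- Cocycles of the Aomoto complex in degree `q`. -/
noncomputable def cocycles (A : CDGA k) (a : A.grading 1) (q : ℕ) :
    Submodule k (A.grading q) :=
  LinearMap.ker (A.delta a q)

/-- Coboundaries of the Aomoto complex in degree `q`. -/
noncomputable def coboundaries (A : CDGA k) (a : A.grading 1) : (q : ℕ) → Submodule k (A.grading q)
  | 0 => ⊥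
  | (q + 1) => LinearMap.range (A.delta a q)

instance gradingAddCommGroup (A : CDGA k) (q : ℕ) : AddCommGroup (A.grading q) :=
  Submodule.addCommGroup _

/-- Cohomology of the Aomoto complex `H^q(A, δ_a)`. -/
abbrev cohomology (A : CDGA k) (a : A.grading 1) (q : ℕ) :=
  A.cocycles a q ⧸ (A.coboundaries a q).comap (A.cocycles a q).subtype

/-- `dim_k H^q(A, δ_a)`. -/
noncomputable def hdim (A : CDGA k) (a : A.grading 1) (q : ℕ) : ℕ :=
  Module.finrank k (A.cohomology a q)

/-- The resonance variety `R^q_s(A) = {a ∈ MC(A) : dim_k H^q(A, δ_a) ≥ s}`. -/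
noncomputable def Res (A : CDGA k) (q s : ℕ) : Set (A.grading 1) :=
  {a | A.IsMC a ∧ s ≤ A.hdim a q}

/-- A morphism of CDGAs: a `k`-algebra map preserving degrees and differentials. -/
structure Hom (A B : CDGA k) where
  toAlgHom : A.carrier →ₐ[k] B.carrier
  map_mem : ∀ ⦃i : ℕ⦄ ⦃u : A.carrier⦄, u ∈ A.grading i → toAlgHom u ∈ B.grading i
  map_d : ∀ u : A.carrier, toAlgHom (A.d u) = B.d (toAlgHom u)

/-- The restriction `φ^i : A^i → B^i` of a CDGA morphism. -/
def Hom.res {A B : CDGA k} (φ : Hom A B) (i : ℕ) : A.grading i →ₗ[k] B.grading i where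
  toFun u := ⟨φ.toAlgHom u, φ.map_mem u.2⟩
  map_add' u v := by ext; simp
  map_smul' c u := by ext; simp

/-- Composition of CDGA morphisms. -/
def Hom.comp {A B C : CDGA k} (ψ : Hom B C) (φ : Hom A B) : Hom A C where
  toAlgHom := ψ.toAlgHom.comp φ.toAlgHom
  map_mem := fun _ _ hu => ψ.map_mem (φ.map_mem hu)
  map_d := fun u => by
    simp only [AlgHom.comp_apply]
    rw [φ.map_d, ψ.map_d]

end CDGA

/-- A Poincaré duality CDGA of formal dimension `m`: a connected, finite-type CDGA
equipped with an orientation `ε` (a linear functional supported in degree `m`) such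
that the pairing `A^i × A^{m-i} → k`, `(u,v) ↦ ε(u·v)`, is non-singular for `i ≤ m`
(equivalently, non-degenerate on both sides, in finite dimensions), `A^i = 0` for
`i > m`, and `d(A^{m-1}) = 0`. -/
structure PDCDGA (k : Type) [Field k] (m : ℕ) extends CDGA k where
  finType : ∀ i : ℕ, FiniteDimensional k (grading i)
  connected : ∀ u ∈ grading 0, ∃ c : k, u = algebraMap k carrier c
  ε : carrier →ₗ[k] k
  ε_supp : ∀ ⦃i : ℕ⦄, i ≠ m → ∀ ⦃u : carrier⦄, u ∈ grading i → ε u = 0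
  nondeg_left : ∀ ⦃i : ℕ⦄, i ≤ m → ∀ ⦃u : carrier⦄, u ∈ grading i →
    (∀ ⦃v : carrier⦄, v ∈ grading (m - i) → ε (u * v) = 0) → u = 0
  nondeg_right : ∀ ⦃i : ℕ⦄, i ≤ m → ∀ ⦃v : carrier⦄, v ∈ grading (m - i) →
    (∀ ⦃u : carrier⦄, u ∈ grading i → ε (u * v) = 0) → v = 0
  grading_top : ∀ ⦃i : ℕ⦄, m < i → grading i = ⊥
  d_top : ∀ ⦃u : carrier⦄, u ∈ grading (m - 1) → d u = 0

section Aux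

set_option synthInstance.maxHeartbeats 1000000
set_option maxHeartbeats 1000000

open Module LinearMap

variable {k : Type} [Field k] {m : ℕ}

@[simp] lemma CDGA.delta_coe (A : CDGA k) (a : A.grading 1) (q : ℕ) (u : A.grading q) :
    ((A.delta a q u : A.carrier)) = (a : A.carrier) * u + A.d u := rfl

/-- `a² + a² = 0` for `a` of degree 1. -/
lemma CDGA.sq_add_sq (A : CDGA k) (a : A.grading 1) :
    (a : A.carrier) * a + (a : A.carrier) * a = 0 := by
  have h := A.gcomm a.2 a.2
  simp only [mul_one, pow_one, neg_smul, one_smul] at h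
  nth_rewrite 1 [h]
  exact neg_add_cancel _

lemma CDGA.isMC_neg (A : CDGA k) {a : A.grading 1} (h : A.IsMC a) : A.IsMC (-a) := by
  have h2 := A.sq_add_sq a
  have hd : A.d (a : A.carrier) = -((a : A.carrier) * a) :=
    eq_neg_of_add_eq_zero_right h
  show ((-a : A.grading 1) : A.carrier) * ((-a : A.grading 1) : A.carrier)
      + A.d ((-a : A.grading 1) : A.carrier) = 0
  have hc : ((-a : A.grading 1) : A.carrier) = -(a : A.carrier) := rfl
  rw [hc, map_neg, neg_mul_neg, hd, neg_neg]
  exact h2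

/-- `δ_a ∘ δ_a = 0` when `a` satisfies Maurer–Cartan. -/
lemma CDGA.delta_delta (A : CDGA k) {a : A.grading 1} (h : A.IsMC a) (q : ℕ)
    (u : A.grading q) : A.delta a (q + 1) (A.delta a q u) = 0 := by
  apply Subtype.ext
  have hl := A.leibniz a.2 u.2
  have hmc : (a : A.carrier) * a = -(A.d (a : A.carrier)) :=
    eq_neg_of_add_eq_zero_left h
  simp only [CDGA.delta_coe, ZeroMemClass.coe_zero]
  rw [map_add, hl, A.d_sq, mul_add, ← mul_assoc, hmc]
  simp only [pow_one, neg_smul, one_smul, neg_mul]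
  abel

variable (A : PDCDGA k m)

/-- The (unconstrained-degree) Poincaré pairing, as a map to the dual. -/
noncomputable def PDCDGA.Bp (i j : ℕ) :
    A.toCDGA.grading i →ₗ[k] Module.Dual k (A.toCDGA.grading j) :=
  LinearMap.mk₂ k (fun u v => A.ε ((u : A.toCDGA.carrier) * v))
    (fun u u' v => by simp [add_mul]) (fun c u v => by simp [smul_mul_assoc])
    (fun u v v' => by simp [mul_add]) (fun c u v => by simp [mul_smul_comm])

@[simp] lemma PDCDGA.Bp_apply (i j : ℕ) (u : A.toCDGA.grading i) (v : A.toCDGA.grading j) :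
    A.Bp i j u v = A.ε ((u : A.toCDGA.carrier) * v) := rfl

lemma PDCDGA.Bp_injective {i j : ℕ} (h : i + j = m) : Function.Injective (A.Bp i j) := by
  have key : ∀ u : A.toCDGA.grading i, A.Bp i j u = 0 → u = 0 := by
    intro u hu
    have hij : m - i = j := by omega
    apply Subtype.ext
    refine A.nondeg_left (by omega) u.2 ?_
    intro v hv
    have hv' : v ∈ A.toCDGA.grading j := hij ▸ hv
    have := congrFun (congrArg (fun f => f.toFun) hu) ⟨v, hv'⟩
    simpa using this
  intro u1 u2 e
  have : u1 - u2 = 0 := key _ (by rw [map_sub, e, sub_self])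
  exact sub_eq_zero.mp this

lemma PDCDGA.findim_eq {i j : ℕ} (h : i + j = m) :
    finrank k (A.toCDGA.grading i) = finrank k (A.toCDGA.grading j) := by
  haveI := A.finType i
  haveI := A.finType j
  have h1 : finrank k (A.toCDGA.grading i) ≤ finrank k (A.toCDGA.grading j) := by
    have := LinearMap.finrank_le_finrank_of_injective (A.Bp_injective h)
    rwa [Subspace.dual_finrank_eq] at this
  have h2 : finrank k (A.toCDGA.grading j) ≤ finrank k (A.toCDGA.grading i) := by
    have := LinearMap.finrank_le_finrank_of_injective (A.Bp_injective (by omega : j + i = m))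
    rwa [Subspace.dual_finrank_eq] at this
  omega

lemma PDCDGA.Bp_surjective {i j : ℕ} (h : i + j = m) :
    Function.Surjective (A.Bp i j) := by
  haveI := A.finType i
  haveI := A.finType j
  exact (LinearMap.injective_iff_surjective_of_finrank_eq_finrank
    (by rw [Subspace.dual_finrank_eq]; exact A.findim_eq h)).mp (A.Bp_injective h)

lemma PDCDGA.adjoint (a : A.toCDGA.grading 1) {i j : ℕ} (h : i + 1 + j = m)
    (u : A.toCDGA.grading i) (v : A.toCDGA.grading j) :
    A.ε ((A.toCDGA.delta a i u : A.toCDGA.carrier) * v)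
      = ((-1 : k) ^ (i + 1)) •
        A.ε ((u : A.toCDGA.carrier) * (A.toCDGA.delta (-a) j v : A.toCDGA.carrier)) := by
  have hca : ((-a : A.toCDGA.grading 1) : A.toCDGA.carrier) = -(a : A.toCDGA.carrier) := rfl
  have hgc := A.toCDGA.gcomm a.2 u.2
  rw [one_mul] at hgc
  have e1 : ((a : A.toCDGA.carrier) * u) * (v : A.toCDGA.carrier)
      = ((-1 : k) ^ i) • ((u : A.toCDGA.carrier) * ((a : A.toCDGA.carrier) * v)) := by
    rw [hgc, smul_mul_assoc, mul_assoc]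
  have huv : (u : A.toCDGA.carrier) * v ∈ A.toCDGA.grading (m - 1) := by
    have hm := SetLike.mul_mem_graded u.2 v.2
    have hij : i + j = m - 1 := by omega
    rwa [hij] at hm
  have hlb := A.toCDGA.leibniz u.2 v.2
  rw [A.d_top huv] at hlb
  have e2 : A.toCDGA.d (u : A.toCDGA.carrier) * v
      = -(((-1 : k) ^ i) • ((u : A.toCDGA.carrier) * A.toCDGA.d (v : A.toCDGA.carrier))) :=
    eq_neg_of_add_eq_zero_left hlb.symm
  simp only [CDGA.delta_coe, hca]
  rw [add_mul, e1, e2, mul_add, neg_mul, mul_neg]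
  simp only [map_add, map_neg, map_smul, smul_eq_mul]
  ring

open Module LinearMap in
lemma PDCDGA.rank_delta (a : A.toCDGA.grading 1) {i j : ℕ} (h : i + 1 + j = m) :
    Module.finrank k (LinearMap.range (A.toCDGA.delta a i))
      = Module.finrank k (LinearMap.range (A.toCDGA.delta (-a) j)) := by
  haveI := A.finType i; haveI := A.finType j
  haveI := A.finType (i + 1); haveI := A.finType (j + 1)
  have key : (A.Bp (i + 1) j) ∘ₗ (A.toCDGA.delta a i)
      = ((-1 : k) ^ (i + 1)) • ((A.toCDGA.delta (-a) j).dualMap ∘ₗ A.Bp i (j + 1)) := by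
    apply LinearMap.ext; intro u
    apply LinearMap.ext; intro v
    simp only [LinearMap.comp_apply, LinearMap.smul_apply, LinearMap.dualMap_apply,
      PDCDGA.Bp_apply]
    exact A.adjoint a h u v
  have hinj : Function.Injective (A.Bp (i + 1) j) := A.Bp_injective (by omega)
  have hsurj : Function.Surjective (A.Bp i (j + 1)) := A.Bp_surjective (by omega)
  have hc : ((-1 : k) ^ (i + 1)) ≠ 0 := pow_ne_zero _ (neg_ne_zero.mpr one_ne_zero)
  calc finrank k (range (A.toCDGA.delta a i))
      = finrank k (range ((A.Bp (i + 1) j) ∘ₗ (A.toCDGA.delta a i))) := by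
        rw [LinearMap.range_comp]
        exact (Submodule.equivMapOfInjective _ hinj _).finrank_eq
    _ = finrank k (range (((-1 : k) ^ (i + 1)) •
          ((A.toCDGA.delta (-a) j).dualMap ∘ₗ A.Bp i (j + 1)))) := by rw [key]
    _ = finrank k (range ((A.toCDGA.delta (-a) j).dualMap ∘ₗ A.Bp i (j + 1))) := by
        rw [LinearMap.range_smul _ _ hc]
    _ = finrank k (range ((A.toCDGA.delta (-a) j).dualMap)) := by
        rw [LinearMap.range_comp, LinearMap.range_eq_top.mpr hsurj, Submodule.map_top]
    _ = finrank k (range (A.toCDGA.delta (-a) j)) :=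
        LinearMap.finrank_range_dualMap_eq_finrank_range _

lemma PDCDGA.rank_delta_top (a : A.toCDGA.grading 1) :
    Module.finrank k (LinearMap.range (A.toCDGA.delta a m)) = 0 := by
  haveI := A.finType (m + 1)
  have hb : A.toCDGA.grading (m + 1) = ⊥ := A.grading_top (Nat.lt_succ_self m)
  have h0 : Module.finrank k (A.toCDGA.grading (m + 1)) = 0 := by
    rw [hb]; exact finrank_bot k _
  have hle := Submodule.finrank_le (LinearMap.range (A.toCDGA.delta a m))
  omega

lemma PDCDGA.hdim_add (a : A.toCDGA.grading 1) (hmc : A.toCDGA.IsMC a) (q : ℕ) :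
    A.toCDGA.hdim a q + Module.finrank k (A.toCDGA.coboundaries a q)
      = Module.finrank k (A.toCDGA.cocycles a q) := by
  haveI := A.finType q
  have hle : A.toCDGA.coboundaries a q ≤ A.toCDGA.cocycles a q := by
    cases q with
    | zero => exact bot_le
    | succ q =>
      rintro x ⟨y, rfl⟩
      exact LinearMap.mem_ker.mpr (A.toCDGA.delta_delta hmc q y)
  have e := Submodule.finrank_quotient_add_finrank
    ((A.toCDGA.coboundaries a q).comap (A.toCDGA.cocycles a q).subtype)
  have e2 : Module.finrank k
        ((A.toCDGA.coboundaries a q).comap (A.toCDGA.cocycles a q).subtype)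
      = Module.finrank k (A.toCDGA.coboundaries a q) :=
    (Submodule.comapSubtypeEquivOfLe hle).finrank_eq
  rw [e2] at e
  exact e

lemma PDCDGA.finrank_cocycles (a : A.toCDGA.grading 1) (q : ℕ) :
    Module.finrank k (LinearMap.range (A.toCDGA.delta a q))
        + Module.finrank k (A.toCDGA.cocycles a q)
      = Module.finrank k (A.toCDGA.grading q) := by
  haveI := A.finType q
  exact LinearMap.finrank_range_add_finrank_ker _

lemma PDCDGA.hdim_dual (a : A.toCDGA.grading 1) (hmc : A.toCDGA.IsMC a)
    {i : ℕ} (hi : i ≤ m) : A.toCDGA.hdim a i = A.toCDGA.hdim (-a) (m - i) := by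
  obtain ⟨j, hj, hij⟩ : ∃ j, m - i = j ∧ i + j = m := ⟨m - i, rfl, by omega⟩
  rw [hj]
  have hmcn := A.toCDGA.isMC_neg hmc
  have E1 := A.hdim_add a hmc i
  have E2 := A.finrank_cocycles a i
  have E3 := A.hdim_add (-a) hmcn j
  have E4 := A.finrank_cocycles (-a) j
  have E5 := A.findim_eq hij
  have E6 : Module.finrank k (A.toCDGA.coboundaries a i)
      = Module.finrank k (LinearMap.range (A.toCDGA.delta (-a) j)) := by
    cases i with
    | zero =>
      have hjm : j = m := by omega
      subst hjm
      have hb : A.toCDGA.coboundaries a 0 = ⊥ := rfl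
      rw [hb, A.rank_delta_top (-a)]
      exact finrank_bot k _
    | succ i' =>
      have h' : j + 1 + i' = m := by omega
      have hr := A.rank_delta (-a) h'
      rw [neg_neg] at hr
      exact hr.symm
  have E7 : Module.finrank k (A.toCDGA.coboundaries (-a) j)
      = Module.finrank k (LinearMap.range (A.toCDGA.delta a i)) := by
    cases j with
    | zero =>
      have him : i = m := by omega
      subst him
      have hb : A.toCDGA.coboundaries (-a) 0 = ⊥ := rfl
      rw [hb, A.rank_delta_top a]
      exact finrank_bot k _
    | succ j' =>
      exact (A.rank_delta a (by omega : i + 1 + j' = m)).symm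
  omega


end Aux

/-- Let `(A, d)` be an `m`-PD-CDGA over `k`.  The involution
`a ↦ -a` of `A^1` restricts to a bijection of `R^i_s(A)` onto `R^{m-i}_s(A)` for all
`0 ≤ i ≤ m` and `s ≥ 0`; that is, for `a ∈ MC(A)`,
`dim_k H^i(A, δ_a) ≥ s ↔ dim_k H^{m-i}(A, δ_{-a}) ≥ s`. -/
theorem statement16 {k : Type} [Field k] {m : ℕ} (A : PDCDGA k m) :
    (∀ i : ℕ, i ≤ m → ∀ s : ℕ,
      (fun a : A.toCDGA.grading 1 => -a) '' (A.toCDGA.Res i s)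
        = A.toCDGA.Res (m - i) s) ∧
    (∀ a : A.toCDGA.grading 1, A.toCDGA.IsMC a → ∀ i : ℕ, i ≤ m → ∀ s : ℕ,
      (s ≤ A.toCDGA.hdim a i ↔ s ≤ A.toCDGA.hdim (-a) (m - i))) := by
  have main : ∀ (a : A.toCDGA.grading 1), A.toCDGA.IsMC a → ∀ i : ℕ, i ≤ m →
      A.toCDGA.hdim a i = A.toCDGA.hdim (-a) (m - i) :=
    fun a hmc i hi => A.hdim_dual a hmc hi
  constructor
  · intro i hi s
    ext x
    simp only [Set.mem_image, CDGA.Res, Set.mem_setOf_eq]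
    constructor
    · rintro ⟨a, ⟨hmc, hs⟩, rfl⟩
      exact ⟨A.toCDGA.isMC_neg hmc, by rw [← main a hmc i hi]; exact hs⟩
    · rintro ⟨hmc, hs⟩
      refine ⟨-x, ⟨A.toCDGA.isMC_neg hmc, ?_⟩, neg_neg x⟩
      rw [main (-x) (A.toCDGA.isMC_neg hmc) i hi, neg_neg]
      exact hs
  · intro a hmc i hi s
    rw [main a hmc i hi]
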